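/- Let $f(x) = \frac{1}{2}(x_1(x_3+x_4) + x_2(x_3-x_4))$ with coefficients $c_{\{1,3\}} = c_{\{1,4\}} = c_{\{2,3\}} = 1/2$, $c_{\{2,4\}} = -1/2$. For $i \in [4]$ define $w_i = \sqrt{2} \sum_{j \in [4] \setminus \{i\}} c_{\{i,j\}} e_j \in \mathbb{R}^4$ (with $c_{\{i,j\}} = 0$ if $\{i,j\}$ is not among the four pairs above), and define the $6 \times 6$ matrices $A(i)$ in $3 \times 3$ block form (block sizes $1, 4, 1$) with $(2,1)$ block $w_i$, $(3,2)$ block $e_i^{\mathsf{T}}$, and zeros elsewhere. Then: (a) each $w_i$ is a unit vector and $\|A(i)\| \leq 1$; (b) $A(i)^2 = 0$ for all $i$; (c) $A(i)A(j) = A(j)A(i)$ for all $i,j$; (d) $\langle e_6, A(i)A(j) e_1 \rangle = \sqrt{2}\, c_{\{i,j\}}$ for $i \neq j$. -/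
import Mathlib


noncomputable def opNorm {ι : Type*} [Fintype ι] [DecidableEq ι] (M : Matrix ι ι ℝ) : ℝ :=
  ‖LinearMap.toContinuousLinearMap (Matrix.toEuclideanLin M)‖

noncomputable def cpair : Fin 4 → Fin 4 → ℝ := fun i j =>
  if ({i, j} : Finset (Fin 4)) = {0, 2} ∨ ({i, j} : Finset (Fin 4)) = {0, 3}
      ∨ ({i, j} : Finset (Fin 4)) = {1, 2} then 1 / 2
  else if ({i, j} : Finset (Fin 4)) = {1, 3} then -1 / 2
  else 0

noncomputable def w (i : Fin 4) : Fin 4 → ℝ := fun j =>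
  if j = i then 0 else Real.sqrt 2 * cpair i j

noncomputable def A (i : Fin 4) : Matrix (Unit ⊕ Fin 4 ⊕ Unit) (Unit ⊕ Fin 4 ⊕ Unit) ℝ :=
  Matrix.of fun r s =>
    match r, s with
    | Sum.inr (Sum.inl j), Sum.inl _ => w i j
    | Sum.inr (Sum.inr _), Sum.inr (Sum.inl j) => if j = i then 1 else 0
    | _, _ => 0

lemma cpair_symm (i j : Fin 4) : cpair i j = cpair j i := by
  unfold cpair; rw [Finset.pair_comm]

lemma wsum (i : Fin 4) : (∑ j, w i j ^ 2) = 1 := by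
  have h2 : Real.sqrt 2 ^ 2 = 2 := Real.sq_sqrt (by norm_num)
  fin_cases i <;>
    · simp (config := { decide := true }) only [w, cpair, Fin.sum_univ_four]
      norm_num [mul_pow, h2]

lemma prod_eq (i j : Fin 4) : A i * A j = Matrix.of fun r s =>
    match r, s with
    | Sum.inr (Sum.inr _), Sum.inl _ => w j i
    | _, _ => 0 := by
  ext r s
  simp only [Matrix.mul_apply, Fintype.sum_sum_type, Finset.univ_unique,
    Finset.sum_singleton, A, Matrix.of_apply]
  rcases r with _ | j' | _ <;> rcases s with _ | s' | _ <;>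
    (try rcases j' with j' | _) <;> (try rcases s' with s' | _) <;>
    simp [Finset.sum_ite_eq']

lemma opnorm_le (i : Fin 4) : opNorm (A i) ≤ 1 := by
  rw [opNorm]
  refine ContinuousLinearMap.opNorm_le_bound _ zero_le_one fun x => ?_
  rw [one_mul, LinearMap.coe_toContinuousLinearMap', EuclideanSpace.norm_eq,
    EuclideanSpace.norm_eq]
  apply Real.sqrt_le_sqrt
  have hy : ∀ k, Matrix.toEuclideanLin (A i) x k = (A i).mulVec (fun s => x s) k :=
    fun k => rfl
  simp only [Real.norm_eq_abs, sq_abs, hy]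
  simp only [Matrix.mulVec, dotProduct, Fintype.sum_sum_type,
    Finset.univ_unique, Finset.sum_singleton, A, Matrix.of_apply,
    zero_mul, Finset.sum_const_zero, add_zero, zero_add, mul_zero,
    ite_mul, one_mul]
  rw [Finset.sum_ite_eq' Finset.univ i (fun j => x (Sum.inr (Sum.inl j))),
    if_pos (Finset.mem_univ i)]
  have h1 : ∑ j : Fin 4, (w i j * x (Sum.inl default)) ^ 2
      = x (Sum.inl default) ^ 2 := by
    simp only [mul_pow, ← Finset.sum_mul, wsum i, one_mul]
  rw [h1]
  have h3 : x (Sum.inr (Sum.inl i)) ^ 2 ≤ ∑ j : Fin 4, x (Sum.inr (Sum.inl j)) ^ 2 :=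
    Finset.single_le_sum (f := fun j => x (Sum.inr (Sum.inl j)) ^ 2)
      (fun j _ => sq_nonneg _) (Finset.mem_univ i)
  nlinarith [sq_nonneg (x (Sum.inr (Sum.inr default)))]

lemma w_symm (i j : Fin 4) : w i j = w j i := by
  rcases eq_or_ne i j with rfl | h
  · rfl
  · simp only [w, if_neg h.symm, if_neg h, cpair_symm]

theorem stmt13 :
    (∀ i, (∑ j, w i j ^ 2) = 1 ∧ opNorm (A i) ≤ 1) ∧
    (∀ i, A i * A i = 0) ∧
    (∀ i j, A i * A j = A j * A i) ∧
    (∀ i j, i ≠ j →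
      (A i * A j) (Sum.inr (Sum.inr ())) (Sum.inl ()) = Real.sqrt 2 * cpair i j) := by
  refine ⟨fun i => ⟨wsum i, opnorm_le i⟩, fun i => ?_, fun i j => ?_, fun i j hij => ?_⟩
  · rw [prod_eq]
    ext r s
    rcases r with _ | j' | _ <;> rcases s with _ | s' | _ <;>
      (try rcases j' with j' | _) <;> (try rcases s' with s' | _) <;>
      simp [w]
  · rw [prod_eq, prod_eq, w_symm]
  · rw [prod_eq]
    simp only [Matrix.of_apply, w, if_neg hij, cpair_symm j i]
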